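/- Let σ, N > 0 and β ∈ ℝ. Suppose p₁, κ₁ > 0 and p₂, κ₂ > 0 both satisfy σ²·(1 + pᵢ/N)^(−κᵢ)·(1 + κᵢ·ln(1 + pᵢ/N)) + β = 0 for i = 1, 2, and suppose p₁ < p₂. Then κ₁ > κ₂. -/

import Mathlib

/-!
Writing `u = log (1 + p/N) > 0`, the power `(1 + p/N)^(-κ)` is `exp (-(κ u))`, so the
optimality condition says `σ² g(κ u) = -β` with `g t = exp (-t) (1 + t)`. Since `g` is strictly
decreasing on `[0, ∞)`, both pairs share the same product `κ₁ u₁ = κ₂ u₂`; as `u₁ < u₂`, this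
forces `κ₁ > κ₂`.
-/

open Real Set

lemma strictAntiOn_exp_neg_mul_one_add :
    StrictAntiOn (fun t : ℝ => exp (-t) * (1 + t)) (Ici 0) := by
  intro a (ha : 0 ≤ a) b _ hab
  have hexp : b - a + 1 < exp (b - a) := add_one_lt_exp (sub_ne_zero.mpr hab.ne')
  have hsplit : exp (-a) = exp (-b) * exp (b - a) := by rw [← exp_add]; ring_nf
  have hb : 0 < exp (-b) := exp_pos _
  -- `exp (b - a) (1 + a) > (1 + b - a)(1 + a) = 1 + b + a (b - a) ≥ 1 + b`
  show exp (-b) * (1 + b) < exp (-a) * (1 + a)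
  rw [hsplit, mul_assoc]
  gcongr
  nlinarith [mul_nonneg ha (sub_nonneg.mpr hab.le)]

lemma rpow_neg_mul_one_add_mul_log {x : ℝ} (hx : 0 < x) (κ : ℝ) :
    x ^ (-κ) * (1 + κ * log x) = exp (-(κ * log x)) * (1 + κ * log x) := by
  rw [rpow_def_of_pos hx]
  ring_nf

lemma lt_of_mul_eq_mul_of_lt {a b u v : ℝ} (hb : 0 < b) (hu : 0 < u) (huv : u < v)
    (h : a * u = b * v) : b < a := by
  have : b * u < a * u := h ▸ mul_lt_mul_of_pos_left huv hb
  exact lt_of_mul_lt_mul_right this hu.le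

theorem stmt11_general (σ N β p₁ κ₁ p₂ κ₂ : ℝ) (hσ : 0 < σ) (hN : 0 < N)
    (hp₁ : 0 < p₁) (hκ₁ : 0 < κ₁) (hκ₂ : 0 < κ₂)
    (heq₁ : σ ^ 2 * (1 + p₁ / N) ^ (-κ₁) * (1 + κ₁ * Real.log (1 + p₁ / N)) + β = 0)
    (heq₂ : σ ^ 2 * (1 + p₂ / N) ^ (-κ₂) * (1 + κ₂ * Real.log (1 + p₂ / N)) + β = 0)
    (hpp : p₁ < p₂) :
    κ₁ > κ₂ := by
  have hx₁ : 1 < 1 + p₁ / N := lt_add_of_pos_right 1 (div_pos hp₁ hN)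
  have hx₁₂ : 1 + p₁ / N < 1 + p₂ / N := by gcongr
  have hu₁ : 0 < log (1 + p₁ / N) := log_pos hx₁
  have hu₁₂ : log (1 + p₁ / N) < log (1 + p₂ / N) := log_lt_log (by linarith) hx₁₂
  have hu₂ : 0 < log (1 + p₂ / N) := hu₁.trans hu₁₂
  rw [mul_assoc, rpow_neg_mul_one_add_mul_log (by linarith)] at heq₁ heq₂
  have hg : exp (-(κ₁ * log (1 + p₁ / N))) * (1 + κ₁ * log (1 + p₁ / N)) =
      exp (-(κ₂ * log (1 + p₂ / N))) * (1 + κ₂ * log (1 + p₂ / N)) :=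
    mul_left_cancel₀ (pow_pos hσ 2).ne' (by linarith)
  have hprod := strictAntiOn_exp_neg_mul_one_add.injOn
    (mul_pos hκ₁ hu₁).le (mul_pos hκ₂ hu₂).le hg
  exact lt_of_mul_eq_mul_of_lt hκ₂ hu₁ hu₁₂ hprod

/-- If two power/mismatch pairs `(p₁, κ₁)` and `(p₂, κ₂)` both
satisfy the local-optimality condition
`σ²(1+p/N)^(−κ)(1 + κ ln(1+p/N)) + β = 0` with the same `β`, and `p₁ < p₂`,
then `κ₁ > κ₂`: larger transmission power entails a smaller mismatch factor. -/
theorem stmt11 (σ N β p₁ κ₁ p₂ κ₂ : ℝ) (hσ : 0 < σ) (hN : 0 < N)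
    (hp₁ : 0 < p₁) (hκ₁ : 0 < κ₁) (hp₂ : 0 < p₂) (hκ₂ : 0 < κ₂)
    (heq₁ : σ ^ 2 * (1 + p₁ / N) ^ (-κ₁) * (1 + κ₁ * Real.log (1 + p₁ / N)) + β = 0)
    (heq₂ : σ ^ 2 * (1 + p₂ / N) ^ (-κ₂) * (1 + κ₂ * Real.log (1 + p₂ / N)) + β = 0)
    (hpp : p₁ < p₂) :
    κ₁ > κ₂ :=
  stmt11_general σ N β p₁ κ₁ p₂ κ₂ hσ hN hp₁ hκ₁ hκ₂ heq₁ heq₂ hpp
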